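/- Let BG = (V, E) be a bi-directed graph and let BG^t = (V^t, E^t) be the directed graph obtained by applying the ListRankingTransform. Two nodes u, v ∈ V are connected by a valid bi-directed walk in BG if and only if there exist orientations a, b ∈ {▷, ◁} such that there is a (nonempty) directed path in BG^t from u^a to v^b (i.e., u⁺ (respectively u⁻) is connected by a directed path to one of v⁺ or v⁻). -/

import Mathlib

/-- Orientations of the arrowheads of a bi-directed edge: `fwd` = ▷, `rev` = ◁. -/
inductive Orient : Type
  | fwd | rev
  deriving DecidableEq

/-- `¬` on orientations: swaps ▷ and ◁. -/
def Orient.neg : Orient → Orient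
  | .fwd => .rev
  | .rev => .fwd

/-- A valid bi-directed walk of length `m ≥ 1` from `u` to `v` in the bi-directed graph
with edge set `E`: a vertex sequence `vert 0 = u, …, vert m = v` together with
orientation pairs `(a l, b l)` for `1 ≤ l ≤ m` such that each step traverses a
bi-directed edge (in either direction) and the orientations of consecutive edges agree
at each intermediate vertex. -/
def IsBiWalk {V : Type*} (E : Set (V × V × Orient × Orient)) (m : ℕ)
    (vert : ℕ → V) (a b : ℕ → Orient) (u v : V) : Prop :=
  1 ≤ m ∧ vert 0 = u ∧ vert m = v ∧
  (∀ l, 1 ≤ l → l ≤ m →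
    (vert (l - 1), vert l, a l, b l) ∈ E ∨
    (vert l, vert (l - 1), (b l).neg, (a l).neg) ∈ E) ∧
  (∀ l, 1 ≤ l → l < m → b l = a (l + 1))

/-- There is a valid bi-directed walk from `u` to `v`. -/
def BiWalk {V : Type*} (E : Set (V × V × Orient × Orient)) (u v : V) : Prop :=
  ∃ m vert a b, IsBiWalk E m vert a b u v

/-- The arcs of the directed graph `BGᵗ` produced by the ListRankingTransform on vertex
set `V × Orient` (writing `v^o` for `(v, o)`): each bi-directed edge `(u, v, o₁, o₂) ∈ E`
yields the two directed arcs `u^{o₁} → v^{o₂}` and `v^{¬o₂} → u^{¬o₁}`. -/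
def TArc {V : Type*} (E : Set (V × V × Orient × Orient)) (p q : V × Orient) : Prop :=
  ∃ u v o₁ o₂, (u, v, o₁, o₂) ∈ E ∧
    ((p = (u, o₁) ∧ q = (v, o₂)) ∨ (p = (v, o₂.neg) ∧ q = (u, o₁.neg)))

lemma Relation.transGen_iff_exists_seq {α : Type*} {r : α → α → Prop} {x y : α} :
    Relation.TransGen r x y ↔
      ∃ m, 1 ≤ m ∧ ∃ s : ℕ → α, s 0 = x ∧ s m = y ∧ ∀ i < m, r (s i) (s (i + 1)) := by
  constructor
  · intro h
    induction h with
    | @single z hxz =>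
      refine ⟨1, le_rfl, fun i => if i = 0 then x else z, rfl, rfl, fun i hi => ?_⟩
      obtain rfl : i = 0 := by omega
      simpa using hxz
    | @tail z w _ hzw ih =>
      obtain ⟨m, hm, s, hs0, hsm, hs⟩ := ih
      refine ⟨m + 1, by omega, Function.update s (m + 1) w, ?_, by simp, fun i hi => ?_⟩
      · simpa [Function.update_of_ne (show (0 : ℕ) ≠ m + 1 by omega)] using hs0
      · rw [Function.update_of_ne (show i ≠ m + 1 by omega)]
        rcases Nat.lt_succ_iff_lt_or_eq.mp hi with hi | rfl
        · simpa [Function.update_of_ne (show i + 1 ≠ m + 1 by omega)] using hs i hi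
        · simpa [hsm] using hzw
  · rintro ⟨m, hm, s, rfl, rfl, hs⟩
    induction m, hm using Nat.le_induction with
    | base => exact .single (hs 0 one_pos)
    | succ k _ ih => exact (ih fun i hi => hs i (by omega)).tail (hs k (by omega))

section BiWalk

variable {V : Type*} {E : Set (V × V × Orient × Orient)}

@[simp] lemma Orient.neg_neg (o : Orient) : o.neg.neg = o := by cases o <;> rfl

lemma tArc_iff {x y : V} {c d : Orient} :
    TArc E (x, c) (y, d) ↔ (x, y, c, d) ∈ E ∨ (y, x, d.neg, c.neg) ∈ E := by
  constructor
  · rintro ⟨x', y', c', d', hE, ⟨⟨⟩, ⟨⟩⟩ | ⟨⟨⟩, ⟨⟩⟩⟩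
    · exact .inl hE
    · exact .inr (by simpa using hE)
  · rintro (hE | hE)
    · exact ⟨x, y, c, d, hE, .inl ⟨rfl, rfl⟩⟩
    · exact ⟨y, x, d.neg, c.neg, hE, .inr ⟨by simp, by simp⟩⟩

/-- The `l`-th step of a walk is the arc `vert (l - 1)^{a l} → vert l^{b l}`; the consistency
condition `b l = a (l + 1)` makes consecutive arcs compose. -/
lemma IsBiWalk.transGen_tArc {m : ℕ} {vert : ℕ → V} {a b : ℕ → Orient} {u v : V}
    (hw : IsBiWalk E m vert a b u v) : Relation.TransGen (TArc E) (u, a 1) (v, b m) := by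
  obtain ⟨hm, rfl, rfl, hstep, hcons⟩ := hw
  refine Relation.transGen_iff_exists_seq.mpr
    ⟨m, hm, fun i => (vert i, if i = 0 then a 1 else b i), by simp,
      by simp [Nat.one_le_iff_ne_zero.mp hm], fun i hi => ?_⟩
  have hsource : (if i = 0 then a 1 else b i) = a (i + 1) := by
    split_ifs with hi0
    · rw [hi0]
    · exact hcons i (by omega) hi
  simpa [hsource, tArc_iff] using hstep (i + 1) (by omega) (by omega)

lemma isBiWalk_of_tArc {m : ℕ} (hm : 1 ≤ m) {s : ℕ → V × Orient}
    (hs : ∀ i < m, TArc E (s i) (s (i + 1))) :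
    IsBiWalk E m (fun i => (s i).1) (fun l => (s (l - 1)).2) (fun l => (s l).2)
      (s 0).1 (s m).1 := by
  refine ⟨hm, rfl, rfl, fun l hl1 hlm => ?_, fun l _ _ => by simp⟩
  obtain ⟨i, rfl⟩ : ∃ i, l = i + 1 := ⟨l - 1, by omega⟩
  simpa [← tArc_iff] using hs i (by omega)

end BiWalk

/-- Lemma 1: Two nodes `u, v` of a bi-directed graph are connected by a
valid bi-directed walk iff there are orientations `a, b` such that there is a
(nonempty) directed path in the ListRankingTransform from `u^a` to `v^b`. -/
theorem biWalk_iff_transGen_tArc {V : Type*} (E : Set (V × V × Orient × Orient))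
    (u v : V) :
    BiWalk E u v ↔ ∃ a b : Orient, Relation.TransGen (TArc E) (u, a) (v, b) := by
  constructor
  · rintro ⟨m, vert, a, b, hw⟩
    exact ⟨a 1, b m, hw.transGen_tArc⟩
  · rintro ⟨a, b, h⟩
    obtain ⟨m, hm, s, hs0, hsm, hs⟩ := Relation.transGen_iff_exists_seq.mp h
    exact ⟨m, _, _, _, hs0 ▸ hsm ▸ isBiWalk_of_tArc hm hs⟩
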